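/- Given the Johnson-Lindenstrauss property ((1−ε)‖x−y‖ ≤ ‖f(x)−f(y)‖ ≤ (1+ε)‖x−y‖ for all x,y ∈ X) for a map f and finite X ⊂ R^d, for every subset S ⊆ X and every α, the smallest enclosing ball radius satisfies: ρ(S) ≤ α implies ρ(f(S)) ≤ α/(1−ε), and ρ(f(S)) ≤ α implies ρ(S) ≤ α/(1−ε). -/

import Mathlib

/-!
Both `f` on `S` and its inverse on `f '' S` are `(1 - ε)⁻¹`-Lipschitz, since `(1 + ε)(1 - ε) ≤ 1`.
So it suffices that an `L`-Lipschitz map on a finite subset of a real inner product space multiplies the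
enclosing radius by at most `L` (a one-point Kirszbraun theorem). Centre a minimal enclosing ball
of the image at `y = ∑ wᵢ f xᵢ`, a convex combination of the image points at the maximal distance
`R`. Then `2 R² = ∑ wᵢ wⱼ ‖f xᵢ - f xⱼ‖² ≤ L² ∑ wᵢ wⱼ ‖xᵢ - xⱼ‖² ≤ 2 L² r²`, because the weighted
variance of the `xᵢ` is at most their mean squared distance to the centre `c` of any ball of
radius `r` containing them.
-/

open MeasureTheory ProbabilityTheory Metric

noncomputable def encRadius {d : ℕ} (S : Set (EuclideanSpace ℝ (Fin d))) : ℝ :=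
  ⨅ c : EuclideanSpace ℝ (Fin d), ⨆ x ∈ S, dist x c

open scoped RealInnerProductSpace Topology NNReal

section WeightedVariance

variable {ι E : Type*} [NormedAddCommGroup E] [InnerProductSpace ℝ E]
  {s : Finset ι} {w : ι → ℝ} (v : ι → E)

theorem sum_mul_norm_sub_sq_eq_add (hw : ∑ i ∈ s, w i = 1) (c : E) :
    ∑ i ∈ s, w i * ‖v i - c‖ ^ 2 =
      ∑ i ∈ s, w i * ‖v i - ∑ j ∈ s, w j • v j‖ ^ 2 + ‖∑ j ∈ s, w j • v j - c‖ ^ 2 := by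
  set q := ∑ j ∈ s, w j • v j
  have hcentered : ∑ i ∈ s, w i • (v i - q) = 0 := by
    simp only [smul_sub, Finset.sum_sub_distrib, ← Finset.sum_smul, hw, one_smul, q, sub_self]
  calc ∑ i ∈ s, w i * ‖v i - c‖ ^ 2
      = ∑ i ∈ s, (w i * ‖v i - q‖ ^ 2 + 2 * ⟪w i • (v i - q), q - c⟫ + w i * ‖q - c‖ ^ 2) :=
        Finset.sum_congr rfl fun i _ => by
          rw [← sub_add_sub_cancel (v i) q c, norm_add_sq_real, real_inner_smul_left]; ring
    _ = ∑ i ∈ s, w i * ‖v i - q‖ ^ 2 + ‖q - c‖ ^ 2 := by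
        rw [Finset.sum_add_distrib, Finset.sum_add_distrib, ← Finset.mul_sum, ← sum_inner,
          hcentered, inner_zero_left, ← Finset.sum_mul, hw]
        ring

theorem sum_mul_norm_sub_centroid_sq_le (hw : ∑ i ∈ s, w i = 1) (c : E) :
    ∑ i ∈ s, w i * ‖v i - ∑ j ∈ s, w j • v j‖ ^ 2 ≤ ∑ i ∈ s, w i * ‖v i - c‖ ^ 2 := by
  rw [sum_mul_norm_sub_sq_eq_add v hw c]
  exact le_add_of_nonneg_right (sq_nonneg _)

theorem sum_sum_mul_norm_sub_sq_eq (hw : ∑ i ∈ s, w i = 1) :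
    ∑ i ∈ s, ∑ j ∈ s, w i * w j * ‖v i - v j‖ ^ 2 =
      2 * ∑ i ∈ s, w i * ‖v i - ∑ j ∈ s, w j • v j‖ ^ 2 := by
  set q := ∑ j ∈ s, w j • v j
  calc ∑ i ∈ s, ∑ j ∈ s, w i * w j * ‖v i - v j‖ ^ 2
      = ∑ i ∈ s, w i * ∑ j ∈ s, w j * ‖v j - v i‖ ^ 2 :=
        Finset.sum_congr rfl fun i _ => by
          rw [Finset.mul_sum]
          exact Finset.sum_congr rfl fun j _ => by rw [norm_sub_rev]; ring
    _ = ∑ i ∈ s, (w i * ∑ j ∈ s, w j * ‖v j - q‖ ^ 2 + w i * ‖v i - q‖ ^ 2) :=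
        Finset.sum_congr rfl fun i _ => by
          rw [sum_mul_norm_sub_sq_eq_add v hw, norm_sub_rev]; ring
    _ = 2 * ∑ i ∈ s, w i * ‖v i - q‖ ^ 2 := by
        rw [Finset.sum_add_distrib, ← Finset.sum_mul, hw]; ring

theorem sum_sum_mul_norm_sub_sq_le (hw₀ : ∀ i ∈ s, 0 ≤ w i) (hw : ∑ i ∈ s, w i = 1) {c : E}
    {r : ℝ} (hr : ∀ i ∈ s, ‖v i - c‖ ≤ r) :
    ∑ i ∈ s, ∑ j ∈ s, w i * w j * ‖v i - v j‖ ^ 2 ≤ 2 * r ^ 2 := by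
  rw [sum_sum_mul_norm_sub_sq_eq v hw]
  gcongr
  calc ∑ i ∈ s, w i * ‖v i - ∑ j ∈ s, w j • v j‖ ^ 2
      ≤ ∑ i ∈ s, w i * ‖v i - c‖ ^ 2 := sum_mul_norm_sub_centroid_sq_le v hw c
    _ ≤ ∑ i ∈ s, w i * r ^ 2 := Finset.sum_le_sum fun i hi =>
        mul_le_mul_of_nonneg_left (pow_le_pow_left₀ (norm_nonneg _) (hr i hi) 2) (hw₀ i hi)
    _ = r ^ 2 := by rw [← Finset.sum_mul, hw, one_mul]

theorem sum_sum_mul_norm_sub_sq_eq_of_norm_eq (hw : ∑ i ∈ s, w i = 1) {R : ℝ}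
    (hR : ∀ i ∈ s, ‖v i - ∑ j ∈ s, w j • v j‖ = R) :
    ∑ i ∈ s, ∑ j ∈ s, w i * w j * ‖v i - v j‖ ^ 2 = 2 * R ^ 2 := by
  rw [sum_sum_mul_norm_sub_sq_eq v hw, Finset.sum_congr rfl fun i hi => by rw [hR i hi],
    ← Finset.sum_mul, hw, one_mul]

end WeightedVariance

section ChebyshevCenter

variable {F : Type*} [NormedAddCommGroup F] [InnerProductSpace ℝ F]

theorem eventually_norm_sub_smul_lt {x u : F} (h : 0 < ⟪x, u⟫) :
    ∀ᶠ t in 𝓝[>] (0 : ℝ), ‖x - t • u‖ < ‖x‖ := by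
  filter_upwards [Ioo_mem_nhdsGT (div_pos h (by positivity : (0 : ℝ) < ‖u‖ ^ 2 + 1))]
    with t ⟨ht₀, ht⟩
  rw [lt_div_iff₀ (by positivity)] at ht
  refine lt_of_pow_lt_pow_left₀ 2 (norm_nonneg x) ?_
  rw [norm_sub_sq_real, real_inner_smul_right, norm_smul, mul_pow, Real.norm_eq_abs, sq_abs]
  nlinarith

theorem exists_forall_inner_sub_pos_of_notMem {K : Set F} (hne : K.Nonempty)
    (hcomplete : IsComplete K) (hconvex : Convex ℝ K) {y : F} (hy : y ∉ K) :
    ∃ q ∈ K, ∀ p ∈ K, 0 < ⟪p - y, q - y⟫ := by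
  obtain ⟨q, hqK, hq⟩ := exists_norm_eq_iInf_of_complete_convex hne hcomplete hconvex y
  have hobtuse := (norm_eq_iInf_iff_real_inner_le_zero hconvex hqK).mp hq
  have hyq : 0 < ‖y - q‖ := norm_pos_iff.mpr (sub_ne_zero.mpr fun h => hy (h ▸ hqK))
  refine ⟨q, hqK, fun p hp => ?_⟩
  have hsplit : ⟪p - y, q - y⟫ = ‖y - q‖ ^ 2 - ⟪y - q, p - q⟫ := by
    rw [show p - y = (p - q) - (y - q) by abel, show q - y = -(y - q) by abel, inner_sub_left,
      inner_neg_right, inner_neg_right, real_inner_self_eq_norm_sq, real_inner_comm]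
    ring
  nlinarith [hobtuse p hp]

theorem exists_center_mem_convexHull_sphere {P : Set F} (hP : P.Finite) (hne : P.Nonempty) :
    ∃ y R, P ⊆ closedBall y R ∧ y ∈ convexHull ℝ (P ∩ sphere y R) := by
  have hne' : hP.toFinset.Nonempty := hP.toFinset_nonempty.mpr hne
  set g : F → ℝ := fun y => hP.toFinset.sup' hne' fun p => dist p y
  have hg : Continuous g :=
    Continuous.finset_sup'_apply hne' fun p _ => continuous_const.dist continuous_id
  obtain ⟨y, hyK, hmin⟩ := (hP.isCompact_convexHull (𝕜 := ℝ)).exists_isMinOn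
    (hne.mono (subset_convexHull ℝ P)) hg.continuousOn
  have hle : ∀ p ∈ P, dist p y ≤ g y := fun p hp =>
    Finset.le_sup' (fun p => dist p y) (hP.mem_toFinset.mpr hp)
  refine ⟨y, g y, hle, ?_⟩
  -- `y` minimises the farthest distance to `P` over the hull of `P`; if it lay outside the hull
  -- of the farthest points, moving it towards that hull would bring it closer to all of `P`.
  by_contra hy
  obtain ⟨p₀, hp₀, hp₀y⟩ := Finset.exists_mem_eq_sup' hne' fun p => dist p y
  have hfar : (P ∩ sphere y (g y)).Nonempty := ⟨p₀, hP.mem_toFinset.mp hp₀, hp₀y.symm⟩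
  obtain ⟨q, hq, hpos⟩ := exists_forall_inner_sub_pos_of_notMem hfar.convexHull
    ((hP.subset Set.inter_subset_left).isCompact_convexHull (𝕜 := ℝ)).isComplete
    (convex_convexHull ℝ _) hy
  have hcloser : ∀ p ∈ P, ∀ᶠ t in 𝓝[>] (0 : ℝ), dist p (y + t • (q - y)) < g y := by
    intro p hp
    simp only [dist_eq_norm, sub_add_eq_sub_sub]
    rcases (hle p hp).eq_or_lt with hfar | hnear
    · rw [← hfar, dist_eq_norm]
      exact eventually_norm_sub_smul_lt (hpos p (subset_convexHull ℝ _ ⟨hp, hfar⟩))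
    · refine (ContinuousAt.eventually_lt ?_ continuousAt_const ?_).filter_mono nhdsWithin_le_nhds
      · fun_prop
      · simpa [← dist_eq_norm] using hnear
  obtain ⟨t, htP, ht⟩ := (((Filter.eventually_all_finset hP.toFinset).mpr fun p hp =>
    hcloser p (hP.mem_toFinset.mp hp)).and (Ioo_mem_nhdsGT one_pos)).exists
  have hmem : y + t • (q - y) ∈ convexHull ℝ P := (convex_convexHull ℝ P).add_smul_sub_mem hyK
    (convexHull_mono Set.inter_subset_left hq) ⟨ht.1.le, ht.2.le⟩
  exact (isMinOn_iff.mp hmin _ hmem).not_gt ((Finset.sup'_lt_iff hne').mpr htP)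

end ChebyshevCenter

theorem LipschitzOnWith.exists_image_subset_closedBall {E F : Type*} [NormedAddCommGroup E]
    [InnerProductSpace ℝ E] [NormedAddCommGroup F] [InnerProductSpace ℝ F] {K : ℝ≥0} {f : E → F}
    {s : Set E} (hf : LipschitzOnWith K f s) (hs : s.Finite) {c : E} {r : ℝ}
    (hsc : s ⊆ closedBall c r) : ∃ y, f '' s ⊆ closedBall y (K * r) := by
  rcases s.eq_empty_or_nonempty with rfl | ⟨x₀, hx₀⟩
  · exact ⟨0, by simp⟩
  obtain ⟨y, R, hR, hy⟩ := exists_center_mem_convexHull_sphere (hs.image f) ⟨f x₀, x₀, hx₀, rfl⟩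
  have hT : (f '' s ∩ sphere y R).Finite := (hs.image f).subset Set.inter_subset_left
  set T := hT.toFinset
  rw [← hT.coe_toFinset, Finset.mem_convexHull'] at hy
  obtain ⟨w, hw₀, hw₁, hwy⟩ := hy
  set g := Function.invFunOn f s
  have hg : ∀ p ∈ T, g p ∈ s ∧ f (g p) = p :=
    fun p hp => Function.invFunOn_pos (hT.mem_toFinset.mp hp).1
  have hr : 0 ≤ r := dist_nonneg.trans (hsc hx₀)
  have hR₀ : 0 ≤ R := dist_nonneg.trans (hR ⟨x₀, hx₀, rfl⟩)
  refine ⟨y, hR.trans (closedBall_subset_closedBall ?_)⟩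
  have hpairs : ∀ p ∈ T, ∀ p' ∈ T, ‖p - p'‖ ^ 2 ≤ K ^ 2 * ‖g p - g p'‖ ^ 2 := by
    intro p hp p' hp'
    have h := hf.dist_le_mul (g p) (hg p hp).1 (g p') (hg p' hp').1
    rw [(hg p hp).2, (hg p' hp').2, dist_eq_norm, dist_eq_norm] at h
    rw [← mul_pow]
    exact pow_le_pow_left₀ (norm_nonneg _) h 2
  have hsphere : ∀ p ∈ T, ‖p - ∑ q ∈ T, w q • q‖ = R := fun p hp => by
    rw [hwy, ← dist_eq_norm]
    exact (hT.mem_toFinset.mp hp).2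
  have hball : ∀ p ∈ T, ‖g p - c‖ ≤ r := fun p hp => by
    rw [← dist_eq_norm]
    exact hsc (hg p hp).1
  have key : 2 * R ^ 2 ≤ K ^ 2 * (2 * r ^ 2) := calc
    2 * R ^ 2 = ∑ p ∈ T, ∑ p' ∈ T, w p * w p' * ‖p - p'‖ ^ 2 :=
      (sum_sum_mul_norm_sub_sq_eq_of_norm_eq id hw₁ hsphere).symm
    _ ≤ ∑ p ∈ T, ∑ p' ∈ T, w p * w p' * (K ^ 2 * ‖g p - g p'‖ ^ 2) :=
      Finset.sum_le_sum fun p hp => Finset.sum_le_sum fun p' hp' =>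
        mul_le_mul_of_nonneg_left (hpairs p hp p' hp') (mul_nonneg (hw₀ p hp) (hw₀ p' hp'))
    _ = K ^ 2 * ∑ p ∈ T, ∑ p' ∈ T, w p * w p' * ‖g p - g p'‖ ^ 2 := by
      simp only [Finset.mul_sum]
      exact Finset.sum_congr rfl fun _ _ => Finset.sum_congr rfl fun _ _ => by ring
    _ ≤ K ^ 2 * (2 * r ^ 2) := by gcongr; exact sum_sum_mul_norm_sub_sq_le g hw₀ hw₁ hball
  rw [← pow_le_pow_iff_left₀ hR₀ (by positivity) two_ne_zero, mul_pow]
  linarith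

section InverseLipschitz

variable {α β : Type*} [MetricSpace α] [MetricSpace β] {f : α → β} {s : Set α} {K : ℝ≥0}

theorem injOn_of_dist_le_mul (hf : ∀ x ∈ s, ∀ y ∈ s, dist x y ≤ K * dist (f x) (f y)) :
    Set.InjOn f s := fun x hx y hy hxy =>
  dist_le_zero.mp <| by simpa [hxy] using hf x hx y hy

theorem lipschitzOnWith_invFunOn_of_dist_le_mul [Nonempty α]
    (hf : ∀ x ∈ s, ∀ y ∈ s, dist x y ≤ K * dist (f x) (f y)) :
    LipschitzOnWith K (Function.invFunOn f s) (f '' s) := by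
  refine LipschitzOnWith.of_dist_le_mul ?_
  rintro _ ⟨x, hx, rfl⟩ _ ⟨y, hy, rfl⟩
  have hleft := (injOn_of_dist_le_mul hf).leftInvOn_invFunOn
  rw [hleft hx, hleft hy]
  exact hf x hx y hy

end InverseLipschitz

section EnclosingRadius

variable {d m : ℕ}

theorem encRadius_nonneg (S : Set (EuclideanSpace ℝ (Fin d))) : 0 ≤ encRadius S :=
  le_ciInf fun _ => Real.iSup_nonneg fun _ => Real.iSup_nonneg fun _ => dist_nonneg

theorem encRadius_le_of_subset_closedBall {S : Set (EuclideanSpace ℝ (Fin d))}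
    {c : EuclideanSpace ℝ (Fin d)} {r : ℝ} (hr : 0 ≤ r) (h : S ⊆ closedBall c r) :
    encRadius S ≤ r := by
  have hbdd : BddBelow (Set.range fun c : EuclideanSpace ℝ (Fin d) => ⨆ x ∈ S, dist x c) :=
    ⟨0, Set.forall_mem_range.mpr fun _ => Real.iSup_nonneg fun _ => Real.iSup_nonneg fun _ =>
      dist_nonneg⟩
  exact (ciInf_le hbdd c).trans (Real.iSup_le (fun x => Real.iSup_le (fun hx => h hx) hr) hr)

theorem exists_subset_closedBall_of_encRadius_lt {S : Set (EuclideanSpace ℝ (Fin d))}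
    (hS : S.Finite) {r : ℝ} (h : encRadius S < r) : ∃ c, S ⊆ closedBall c r := by
  obtain ⟨c, hc⟩ := exists_lt_of_ciInf_lt h
  have hbdd : BddAbove (⋃ x, Set.range fun _ : x ∈ S => dist x c) :=
    (hS.image fun x => dist x c).bddAbove.mono <|
      Set.iUnion_subset fun x => Set.range_subset_iff.mpr fun hx => Set.mem_image_of_mem _ hx
  exact ⟨c, fun x hx => (le_ciSup₂ hbdd x hx).trans hc.le⟩

theorem encRadius_image_le_mul {S : Set (EuclideanSpace ℝ (Fin d))} (hS : S.Finite)
    {K : ℝ≥0} {f : EuclideanSpace ℝ (Fin d) → EuclideanSpace ℝ (Fin m)}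
    (hf : LipschitzOnWith K f S) : encRadius (f '' S) ≤ K * encRadius S := by
  have hlim : Filter.Tendsto (fun r => (K : ℝ) * r) (𝓝[>] encRadius S) (𝓝 (K * encRadius S)) :=
    ((continuous_const.mul continuous_id).tendsto _).mono_left nhdsWithin_le_nhds
  refine ge_of_tendsto hlim ?_
  filter_upwards [self_mem_nhdsWithin] with r hr
  obtain ⟨c, hc⟩ := exists_subset_closedBall_of_encRadius_lt hS hr
  obtain ⟨y, hy⟩ := hf.exists_image_subset_closedBall hS hc
  have hr₀ : 0 ≤ r := (encRadius_nonneg S).trans hr.le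
  exact encRadius_le_of_subset_closedBall (mul_nonneg K.2 hr₀) hy

end EnclosingRadius

theorem stmt_15_general {d m : ℕ} (X : Set (EuclideanSpace ℝ (Fin d))) (hX : X.Finite)
    (ε : ℝ) (hε1 : ε < 1)
    (f : EuclideanSpace ℝ (Fin d) → EuclideanSpace ℝ (Fin m))
    (hf : ∀ x ∈ X, ∀ y ∈ X,
      (1 - ε) * ‖x - y‖ ≤ ‖f x - f y‖ ∧ ‖f x - f y‖ ≤ (1 + ε) * ‖x - y‖) :
    ∀ S ⊆ X, ∀ α : ℝ,
      (encRadius S ≤ α → encRadius (f '' S) ≤ α / (1 - ε)) ∧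
        (encRadius (f '' S) ≤ α → encRadius S ≤ α / (1 - ε)) := by
  intro S hSX α
  have hS : S.Finite := hX.subset hSX
  have hε : 0 < 1 - ε := sub_pos.mpr hε1
  set K : ℝ≥0 := ⟨(1 - ε)⁻¹, inv_nonneg.mpr hε.le⟩
  have hK : (K : ℝ) = (1 - ε)⁻¹ := rfl
  have hfwd : ∀ x ∈ S, ∀ y ∈ S, dist (f x) (f y) ≤ K * dist x y := fun x hx y hy => by
    rw [hK, le_inv_mul_iff₀ hε, dist_eq_norm, dist_eq_norm]
    nlinarith [mul_le_mul_of_nonneg_left (hf x (hSX hx) y (hSX hy)).2 hε.le, sq_nonneg ε,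
      norm_nonneg (x - y)]
  have hbwd : ∀ x ∈ S, ∀ y ∈ S, dist x y ≤ K * dist (f x) (f y) := fun x hx y hy => by
    rw [hK, le_inv_mul_iff₀ hε, dist_eq_norm, dist_eq_norm]
    exact (hf x (hSX hx) y (hSX hy)).1
  have hinv : Function.invFunOn f S '' (f '' S) = S :=
    (injOn_of_dist_le_mul hbwd).invFunOn_image subset_rfl
  refine ⟨fun hα => ?_, fun hα => ?_⟩
  · calc encRadius (f '' S) ≤ K * encRadius S :=
          encRadius_image_le_mul hS (LipschitzOnWith.of_dist_le_mul hfwd)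
      _ ≤ K * α := by gcongr
      _ = α / (1 - ε) := by rw [hK, inv_mul_eq_div]
  · calc encRadius S = encRadius (Function.invFunOn f S '' (f '' S)) := by rw [hinv]
      _ ≤ K * encRadius (f '' S) :=
          encRadius_image_le_mul (hS.image f) (lipschitzOnWith_invFunOn_of_dist_le_mul hbwd)
      _ ≤ K * α := by gcongr
      _ = α / (1 - ε) := by rw [hK, inv_mul_eq_div]

/-- The interleaving condition on Čech simplices: under the JL property,
ρ(S) ≤ α implies ρ(f(S)) ≤ α/(1−ε), and ρ(f(S)) ≤ α implies ρ(S) ≤ α/(1−ε). -/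
theorem stmt_15 {d m : ℕ} (X : Set (EuclideanSpace ℝ (Fin d))) (hX : X.Finite)
    (ε : ℝ) (hε0 : 0 ≤ ε) (hε1 : ε < 1)
    (f : EuclideanSpace ℝ (Fin d) → EuclideanSpace ℝ (Fin m))
    (hf : ∀ x ∈ X, ∀ y ∈ X,
      (1 - ε) * ‖x - y‖ ≤ ‖f x - f y‖ ∧ ‖f x - f y‖ ≤ (1 + ε) * ‖x - y‖) :
    ∀ S ⊆ X, ∀ α : ℝ,
      (encRadius S ≤ α → encRadius (f '' S) ≤ α / (1 - ε)) ∧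
        (encRadius (f '' S) ≤ α → encRadius S ≤ α / (1 - ε)) :=
  stmt_15_general X hX ε hε1 f hf
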